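/- Let A, B be real N×N matrices and let K be a C¹ Matrix N N ℝ-valued function on the triangle {(x,t) : 0 ≤ t ≤ x ≤ π} such that K(x,0)·Aᵀ + (∂K/∂t)(x,0)·Bᵀ = 0 for all x ∈ [0,π] and K(0,0) is symmetric; set à := A − B·K(0,0). If f : [0,π] → ℝ^N is C¹ with B·f'(0) + ÷f(0) = 0, then the function g(t) := f(t) + ∫_t^π K(x,t)ᵀ·f(x) dx satisfies B·g'(0) + A·g(0) = 0. -/

import Mathlib

/-!
Differentiating under the integral sign (the moving lower limit contributes `-F(0,0)`),
`g'(0) = f'(0) - K(0,0)ᵀ f(0) + ∫₀^π K_t(x,0)ᵀ f(x) dx`. In `B g'(0) + A g(0)` the two integrals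
combine to `∫₀^π (A K(x,0)ᵀ + B K_t(x,0)ᵀ) f(x) dx`, which vanishes by the transposed boundary
condition on `K`; by symmetry of `K(0,0)` the remaining terms are `B f'(0) + Ã f(0) = 0`.
-/

open Matrix MeasureTheory Set Filter

attribute [local instance] Matrix.normedAddCommGroup Matrix.normedSpace

section ParametricIntegral

variable {E : Type*} [NormedAddCommGroup E] [NormedSpace ℝ E] {F : ℝ → ℝ → E}

theorem ContDiff.hasDerivAt_uncurry_snd (hF : ContDiff ℝ 1 (Function.uncurry F)) (x t : ℝ) :
    HasDerivAt (F x) (fderiv ℝ (Function.uncurry F) (x, t) (0, 1)) t :=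
  (hF.differentiable one_ne_zero (x, t)).hasFDerivAt.comp_hasDerivAt t
    ((hasDerivAt_const t x).prodMk (hasDerivAt_id t))

theorem ContDiff.continuous_deriv_uncurry_snd (hF : ContDiff ℝ 1 (Function.uncurry F)) :
    Continuous fun p : ℝ × ℝ => deriv (F p.1) p.2 := by
  simp only [fun p : ℝ × ℝ => (hF.hasDerivAt_uncurry_snd p.1 p.2).deriv]
  exact (hF.continuous_fderiv one_ne_zero).clm_apply continuous_const

theorem hasDerivAt_intervalIntegral_of_contDiff (hF : ContDiff ℝ 1 (Function.uncurry F))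
    (a b t₀ : ℝ) :
    HasDerivAt (fun t => ∫ x in a..b, F x t) (∫ x in a..b, deriv (F x) t₀) t₀ := by
  have hFc : ∀ t, Continuous (F · t) := fun t =>
    hF.continuous.comp (continuous_id.prodMk continuous_const)
  have hF'c : Continuous fun x => deriv (F x) t₀ :=
    hF.continuous_deriv_uncurry_snd.comp (continuous_id.prodMk continuous_const)
  obtain ⟨C, hC⟩ := (isCompact_uIcc.prod (isCompact_closedBall t₀ 1)).exists_bound_of_continuousOn
    hF.continuous_deriv_uncurry_snd.continuousOn
  refine (intervalIntegral.hasDerivAt_integral_of_dominated_loc_of_deriv_le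
    (F' := fun t x => deriv (F x) t) (bound := fun _ => C) (Metric.closedBall_mem_nhds t₀ one_pos)
    (.of_forall fun t => (hFc t).aestronglyMeasurable) ((hFc t₀).intervalIntegrable a b)
    hF'c.aestronglyMeasurable ?_ intervalIntegrable_const ?_).2
  · exact .of_forall fun x hx t ht => hC (x, t) ⟨uIoc_subset_uIcc hx, ht⟩
  · exact .of_forall fun x _ t _ => (hF.hasDerivAt_uncurry_snd x t).differentiableAt.hasDerivAt

theorem hasDerivAt_intervalIntegral_diag [CompleteSpace E] (hF : Continuous (Function.uncurry F))
    (t₀ : ℝ) : HasDerivAt (fun t => ∫ x in t₀..t, F x t) (F t₀ t₀) t₀ := by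
  rw [hasDerivAt_iff_isLittleO, Asymptotics.isLittleO_iff]
  intro ε hε
  obtain ⟨δ, hδ, hFδ⟩ := Metric.continuousAt_iff.mp (hF.continuousAt (x := (t₀, t₀))) ε hε
  filter_upwards [Metric.ball_mem_nhds t₀ hδ] with t ht
  have htδ : |t - t₀| < δ := by rwa [Metric.mem_ball, Real.dist_eq] at ht
  have hclose : ∀ x ∈ uIoc t₀ t, ‖F x t - F t₀ t₀‖ ≤ ε := by
    intro x hx
    rw [← dist_eq_norm]
    refine (hFδ (x := (x, t)) ?_).le
    rw [Prod.dist_eq, Real.dist_eq, Real.dist_eq]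
    exact max_lt ((abs_sub_left_of_mem_uIcc (uIoc_subset_uIcc hx)).trans_lt htδ) htδ
  have hint : IntervalIntegrable (F · t) volume t₀ t :=
    (hF.comp (continuous_id.prodMk continuous_const)).intervalIntegrable _ _
  calc ‖(∫ x in t₀..t, F x t) - (∫ x in t₀..t₀, F x t₀) - (t - t₀) • F t₀ t₀‖
      = ‖∫ x in t₀..t, (F x t - F t₀ t₀)‖ := by
        rw [intervalIntegral.integral_sub hint intervalIntegrable_const,
          intervalIntegral.integral_const, intervalIntegral.integral_same, sub_zero]
    _ ≤ ε * |t - t₀| := intervalIntegral.norm_integral_le_of_norm_le_const hclose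
    _ = ε * ‖t - t₀‖ := by rw [Real.norm_eq_abs]

theorem hasDerivAt_intervalIntegral_lower_of_contDiff [CompleteSpace E]
    (hF : ContDiff ℝ 1 (Function.uncurry F)) (b t₀ : ℝ) :
    HasDerivAt (fun t => ∫ x in t..b, F x t) ((∫ x in t₀..b, deriv (F x) t₀) - F t₀ t₀) t₀ := by
  have hint : ∀ t c, IntervalIntegrable (F · t) volume t₀ c := fun t _ =>
    (hF.continuous.comp (continuous_id.prodMk continuous_const)).intervalIntegrable _ _
  refine ((hasDerivAt_intervalIntegral_of_contDiff hF t₀ b t₀).sub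
    (hasDerivAt_intervalIntegral_diag hF.continuous t₀)).congr_of_eventuallyEq
      (.of_forall fun t => ?_)
  exact (intervalIntegral.integral_interval_sub_left (hint t b) (hint t t)).symm

end ParametricIntegral

section MatrixCalculus

variable {ι : Type*} [Fintype ι]

theorem ContDiff.matrix_transpose_mulVec {X : Type*} [NormedAddCommGroup X] [NormedSpace ℝ X]
    {n : WithTop ℕ∞} {M : X → Matrix ι ι ℝ} {v : X → ι → ℝ} (hM : ContDiff ℝ n M)
    (hv : ContDiff ℝ n v) : ContDiff ℝ n fun p => (M p)ᵀ *ᵥ v p := by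
  refine contDiff_pi.2 fun i => ?_
  simp only [mulVec, dotProduct, transpose_apply]
  exact ContDiff.sum fun j _ => (contDiff_pi.1 (contDiff_pi.1 hM j) i).mul (contDiff_pi.1 hv j)

theorem HasDerivAt.matrix_transpose_mulVec_const {M : ℝ → Matrix ι ι ℝ} {M' : Matrix ι ι ℝ}
    {t : ℝ} (hM : HasDerivAt M M' t) (v : ι → ℝ) :
    HasDerivAt (fun s => (M s)ᵀ *ᵥ v) (M'ᵀ *ᵥ v) t := by
  refine hasDerivAt_pi.2 fun i => ?_
  simp only [mulVec, dotProduct, transpose_apply]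
  exact HasDerivAt.fun_sum fun j _ => (hasDerivAt_pi.1 (hasDerivAt_pi.1 hM j) i).mul_const (v j)

theorem Matrix.mulVec_intervalIntegral (M : Matrix ι ι ℝ) {v : ℝ → ι → ℝ} {a b : ℝ}
    (hv : IntervalIntegrable v volume a b) : M *ᵥ ∫ x in a..b, v x = ∫ x in a..b, M *ᵥ v x :=
  (M.mulVecLin.toContinuousLinearMap.intervalIntegral_comp_comm hv).symm

theorem Matrix.mulVec_intervalIntegral_add_mulVec_intervalIntegral_eq_zero
    (A B : Matrix ι ι ℝ) {u v : ℝ → ι → ℝ} {a b : ℝ} (hu : Continuous u) (hv : Continuous v)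
    (h : ∀ x ∈ uIcc a b, B *ᵥ u x + A *ᵥ v x = 0) :
    B *ᵥ (∫ x in a..b, u x) + A *ᵥ (∫ x in a..b, v x) = 0 := by
  rw [mulVec_intervalIntegral _ (hu.intervalIntegrable _ _),
    mulVec_intervalIntegral _ (hv.intervalIntegrable _ _),
    ← intervalIntegral.integral_add ((continuous_const.matrix_mulVec hu).intervalIntegrable _ _)
      ((continuous_const.matrix_mulVec hv).intervalIntegrable _ _)]
  exact (intervalIntegral.integral_congr (g := fun _ => 0) h).trans intervalIntegral.integral_zero

theorem Matrix.mulVec_transpose_mulVec_add_eq_zero {R : Type*} [CommRing R]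
    {A B P Q : Matrix ι ι R} (h : P * Aᵀ + Q * Bᵀ = 0) (v : ι → R) :
    B *ᵥ (Qᵀ *ᵥ v) + A *ᵥ (Pᵀ *ᵥ v) = 0 := by
  have hT : A * Pᵀ + B * Qᵀ = 0 := by
    simpa [transpose_add, transpose_mul, add_comm] using congrArg transpose h
  rw [mulVec_mulVec, mulVec_mulVec, ← add_mulVec, add_comm, hT, zero_mulVec]

end MatrixCalculus

theorem adjoint_transform_boundary
    (N : ℕ)
    (A B : Matrix (Fin N) (Fin N) ℝ)
    (K : ℝ → ℝ → Matrix (Fin N) (Fin N) ℝ)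
    (hKC : ContDiff ℝ 1 (Function.uncurry K))
    (hKbc : ∀ x ∈ Set.Icc (0:ℝ) Real.pi,
      K x 0 * Aᵀ + deriv (fun t => K x t) 0 * Bᵀ = 0)
    (hKsymm : (K 0 0)ᵀ = K 0 0)
    (A' : Matrix (Fin N) (Fin N) ℝ) (hA' : A' = A - B * K 0 0)
    (f : ℝ → Fin N → ℝ) (hfC : ContDiff ℝ 1 f)
    (hfbc : B *ᵥ deriv f 0 + A' *ᵥ f 0 = 0)
    (g : ℝ → Fin N → ℝ)
    (hg : ∀ t : ℝ, g t = f t + ∫ x in t..Real.pi, (K x t)ᵀ *ᵥ f x) :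
    B *ᵥ deriv g 0 + A *ᵥ g 0 = 0 := by
  set F : ℝ → ℝ → Fin N → ℝ := fun x t => (K x t)ᵀ *ᵥ f x
  have hF : ContDiff ℝ 1 (Function.uncurry F) := hKC.matrix_transpose_mulVec (hfC.comp contDiff_fst)
  have hg' : deriv g 0 = deriv f 0 + ((∫ x in 0..Real.pi, deriv (F x) 0) - F 0 0) := by
    rw [funext hg]
    exact ((hfC.differentiable one_ne_zero 0).hasDerivAt.add
      (hasDerivAt_intervalIntegral_lower_of_contDiff hF Real.pi 0)).deriv
  have hcont : Continuous fun x : ℝ => (x, (0 : ℝ)) := continuous_id.prodMk continuous_const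
  have hintegrals : B *ᵥ (∫ x in 0..Real.pi, deriv (F x) 0) + A *ᵥ (∫ x in 0..Real.pi, F x 0) = 0 := by
    refine mulVec_intervalIntegral_add_mulVec_intervalIntegral_eq_zero A B
      (hF.continuous_deriv_uncurry_snd.comp hcont) (hF.continuous.comp hcont) fun x hx => ?_
    have hFt : deriv (F x) 0 = (deriv (K x) 0)ᵀ *ᵥ f x :=
      ((hKC.hasDerivAt_uncurry_snd x 0).differentiableAt.hasDerivAt.matrix_transpose_mulVec_const
        (f x)).deriv
    rw [uIcc_of_le Real.pi_pos.le] at hx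
    simp only [hFt]
    exact mulVec_transpose_mulVec_add_eq_zero (hKbc x hx) (f x)
  have hcorner : B *ᵥ F 0 0 = (B * K 0 0) *ᵥ f 0 := by simp [F, mulVec_mulVec, hKsymm]
  subst hA'
  rw [sub_mulVec] at hfbc
  rw [hg', hg 0, mulVec_add, mulVec_add, mulVec_sub, hcorner]
  linear_combination hfbc + hintegrals
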